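/- arXiv:2007.09040 — 2 statements merged into one kernel-verified Lean document; each statement's English description precedes it below -/
import Mathlib

section
/- Let g be a metric Lie algebra with no non-zero abelian orthogonal factor. If J₁, J₂: g → g are two orthogonal bi-invariant complex structures, then J₁ and J₂ commute. -/
open scoped RealInnerProductSpace TensorProduct

/-- A metric Lie algebra: a real Lie algebra equipped with a positive definite inner product. -/
class MetricLieAlgebra (g : Type*) [LieRing g] [LieAlgebra ℝ g] [Inner ℝ g] : Prop where
  inner_add_left : ∀ x y z : g, ⟪x + y, z⟫ = ⟪x, z⟫ + ⟪y, z⟫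
  inner_smul_left : ∀ (r : ℝ) (x y : g), ⟪r • x, y⟫ = r * ⟪x, y⟫
  inner_symm : ∀ x y : g, ⟪x, y⟫ = ⟪y, x⟫
  inner_self_pos : ∀ x : g, x ≠ 0 → 0 < ⟪x, x⟫

variable {g : Type*} [LieRing g] [LieAlgebra ℝ g] [Inner ℝ g]

/-- An orthogonal factor: an ideal admitting a complementary ideal orthogonal to it. -/
def IsOrthogonalFactor (h : LieIdeal ℝ g) : Prop :=
  ∃ h' : LieIdeal ℝ g, (∀ x ∈ h, ∀ y ∈ h', ⟪x, y⟫ = 0) ∧ h ⊔ h' = ⊤ ∧ h ⊓ h' = ⊥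

/-- An orthogonal projection of a metric Lie algebra. -/
def IsOrthogonalProjection (p : g →ₗ[ℝ] g) : Prop :=
  (∀ x y : g, p ⁅x, y⁆ = ⁅p x, p y⁆) ∧ p ∘ₗ p = p ∧
  (∀ x y : g, p ⁅x, y⁆ = ⁅p x, y⁆) ∧ ∀ x y : g, ⟪p x, y⟫ = ⟪x, p y⟫

/-- An orthogonal bi-invariant complex structure. -/
def IsOrthBiinvCplxStruct (J : g →ₗ[ℝ] g) : Prop :=
  (∀ x : g, J (J x) = -x) ∧ (∀ x y : g, J ⁅x, y⁆ = ⁅J x, y⁆) ∧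
    ∀ x y : g, ⟪J x, J y⟫ = ⟪x, y⟫

/-!
Both `J₁` and `J₂` commute with every `ad x`, so `K = J₁J₂ - J₂J₁` vanishes on `[g, g]` and
takes values in the centre. Since the centre lies in `[g, g]`, this gives `K² = 0`. As a
commutator of two skew-adjoint maps `K` is skew-adjoint, so `⟪Kx, Kx⟫ = -⟪x, K²x⟫ = 0`
and `K = 0`.
-/

namespace MetricLieAlgebra

variable [MetricLieAlgebra g]

lemma inner_zero_right (x : g) : ⟪x, (0 : g)⟫ = 0 := by
  rw [inner_symm, ← zero_smul ℝ (0 : g), inner_smul_left, zero_mul]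

lemma inner_neg_right (x y : g) : ⟪x, -y⟫ = -⟪x, y⟫ := by
  rw [inner_symm, ← neg_one_smul ℝ y, inner_smul_left, inner_symm, neg_one_mul]

lemma inner_sub_left (x y z : g) : ⟪x - y, z⟫ = ⟪x, z⟫ - ⟪y, z⟫ := by
  rw [sub_eq_add_neg, inner_add_left, ← neg_one_smul ℝ y, inner_smul_left]
  ring

lemma inner_sub_right (x y z : g) : ⟪x, y - z⟫ = ⟪x, y⟫ - ⟪x, z⟫ := by
  rw [inner_symm, inner_sub_left, inner_symm y, inner_symm z]

lemma inner_map_left_eq_neg_of_isometry {J : g →ₗ[ℝ] g} (hsq : ∀ x : g, J (J x) = -x)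
    (hJ : ∀ x y : g, ⟪J x, J y⟫ = ⟪x, y⟫) (x y : g) : ⟪J x, y⟫ = -⟪x, J y⟫ := by
  calc ⟪J x, y⟫ = ⟪J x, J (-J y)⟫ := by rw [map_neg, hsq, neg_neg]
    _ = -⟪x, J y⟫ := by rw [hJ, inner_neg_right]

lemma inner_commutator_left {A B : g →ₗ[ℝ] g} (hA : ∀ x y : g, ⟪A x, y⟫ = -⟪x, A y⟫)
    (hB : ∀ x y : g, ⟪B x, y⟫ = -⟪x, B y⟫) (x y : g) :
    ⟪(A ∘ₗ B - B ∘ₗ A) x, y⟫ = -⟪x, (A ∘ₗ B - B ∘ₗ A) y⟫ := by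
  simp only [LinearMap.sub_apply, LinearMap.comp_apply, inner_sub_left, inner_sub_right, hA, hB]
  ring

lemma eq_zero_of_skew_of_apply_apply_eq_zero {K : g →ₗ[ℝ] g}
    (hK : ∀ x y : g, ⟪K x, y⟫ = -⟪x, K y⟫) {x : g} (hx : K (K x) = 0) : K x = 0 := by
  by_contra hne
  have : ⟪K x, K x⟫ = 0 := by rw [hK, hx, inner_zero_right, neg_zero]
  exact (inner_self_pos (K x) hne).ne' this

end MetricLieAlgebra

section LieAlgebra

variable {R L : Type*} [CommRing R] [LieRing L] [LieAlgebra R L]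

lemma LinearMap.apply_eq_zero_of_mem_lie_top_top {f : L →ₗ[R] L}
    (hf : ∀ x y : L, f ⁅x, y⁆ = 0) {b : L} (hb : b ∈ ⁅(⊤ : LieIdeal R L), (⊤ : LieIdeal R L)⁆) :
    f b = 0 := by
  have hle : ((⁅(⊤ : LieIdeal R L), (⊤ : LieIdeal R L)⁆ : LieSubmodule R L L) :
      Submodule R L) ≤ LinearMap.ker f := by
    rw [LieIdeal.toLieSubalgebra_toSubmodule, LieSubmodule.lieIdeal_oper_eq_linear_span',
      Submodule.span_le]
    rintro _ ⟨x, -, y, -, rfl⟩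
    exact hf x y
  exact hle hb

lemma map_lie_eq_lie_map_right {J : L →ₗ[R] L} (hJ : ∀ x y : L, J ⁅x, y⁆ = ⁅J x, y⁆)
    (x y : L) : J ⁅x, y⁆ = ⁅x, J y⁆ := by
  rw [← lie_skew, map_neg, hJ, lie_skew]

variable {J₁ J₂ : L →ₗ[R] L}

lemma commutator_apply_lie (h₁ : ∀ x y : L, J₁ ⁅x, y⁆ = ⁅J₁ x, y⁆)
    (h₂ : ∀ x y : L, J₂ ⁅x, y⁆ = ⁅J₂ x, y⁆) (x y : L) : (J₁ ∘ₗ J₂ - J₂ ∘ₗ J₁) ⁅x, y⁆ = 0 := by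
  simp only [LinearMap.sub_apply, LinearMap.comp_apply]
  rw [map_lie_eq_lie_map_right h₂, h₁, h₁, map_lie_eq_lie_map_right h₂, sub_self]

lemma lie_commutator_apply (h₁ : ∀ x y : L, J₁ ⁅x, y⁆ = ⁅J₁ x, y⁆)
    (h₂ : ∀ x y : L, J₂ ⁅x, y⁆ = ⁅J₂ x, y⁆) (x y : L) : ⁅(J₁ ∘ₗ J₂ - J₂ ∘ₗ J₁) x, y⁆ = 0 := by
  simp only [LinearMap.sub_apply, LinearMap.comp_apply]
  rw [sub_lie, ← h₁, ← h₂, ← h₂, ← h₁]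
  exact commutator_apply_lie h₁ h₂ x y

end LieAlgebra

open MetricLieAlgebra in
theorem stmt7_general (g : Type*) [LieRing g] [LieAlgebra ℝ g] [Inner ℝ g]
    [MetricLieAlgebra g]
    (hZ : ∀ x : g, (∀ y : g, ⁅x, y⁆ = 0) →
      x ∈ ⁅(⊤ : LieIdeal ℝ g), (⊤ : LieIdeal ℝ g)⁆)
    (J₁ J₂ : g →ₗ[ℝ] g)
    (hJ₁ : IsOrthBiinvCplxStruct J₁) (hJ₂ : IsOrthBiinvCplxStruct J₂) :
    J₁ ∘ₗ J₂ = J₂ ∘ₗ J₁ := by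
  obtain ⟨hsq₁, hlie₁, hiso₁⟩ := hJ₁
  obtain ⟨hsq₂, hlie₂, hiso₂⟩ := hJ₂
  have hskew := inner_commutator_left (inner_map_left_eq_neg_of_isometry hsq₁ hiso₁)
    (inner_map_left_eq_neg_of_isometry hsq₂ hiso₂)
  rw [← sub_eq_zero]
  ext x
  refine eq_zero_of_skew_of_apply_apply_eq_zero hskew ?_
  exact LinearMap.apply_eq_zero_of_mem_lie_top_top (commutator_apply_lie hlie₁ hlie₂)
    (hZ _ (lie_commutator_apply hlie₁ hlie₂ x))

/-- Two orthogonal bi-invariant complex structures on a metric Lie algebra with no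
non-zero abelian factor commute. -/
theorem stmt7 (g : Type*) [LieRing g] [LieAlgebra ℝ g] [Inner ℝ g]
    [MetricLieAlgebra g] [Module.Finite ℝ g]
    (hZ : ∀ x : g, (∀ y : g, ⁅x, y⁆ = 0) →
      x ∈ ⁅(⊤ : LieIdeal ℝ g), (⊤ : LieIdeal ℝ g)⁆)
    (J₁ J₂ : g →ₗ[ℝ] g)
    (hJ₁ : IsOrthBiinvCplxStruct J₁) (hJ₂ : IsOrthBiinvCplxStruct J₂) :
    J₁ ∘ₗ J₂ = J₂ ∘ₗ J₁ :=
  stmt7_general g hZ J₁ J₂ hJ₁ hJ₂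
end

section
/- If g is an irreducible metric Lie algebra (over R), then g admits either zero or exactly two orthogonal bi-invariant complex structures; in the latter case the two structures are J and -J for a single J. -/
open scoped RealInnerProductSpace TensorProduct

variable {g : Type*} [LieRing g] [LieAlgebra ℝ g] [Inner ℝ g]

def IsIrreducibleMLA (g : Type*) [LieRing g] [LieAlgebra ℝ g] [Inner ℝ g] : Prop :=
  (∃ x : g, x ≠ 0) ∧ ∀ h : LieIdeal ℝ g, IsOrthogonalFactor h → h = ⊥ ∨ h = ⊤

/-!
Bi-invariance says exactly that a complex structure `J` lies in the centroid of `g`, the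
endomorphisms commuting with every `ad x`. If a centroid element `f` has kernel orthogonal to its
image (for instance if `f` is self- or skew-adjoint), then `ker f` and `im f` are complementary
orthogonal ideals, so irreducibility forces `f = 0` or `f` injective.

For two structures `J`, `J'`, the skew-adjoint centroid element `J J' - J' J` vanishes on
`[g, g]`, which is nonzero (an irreducible abelian `g` is a line, and a line carries no complex
structure); hence `J J' = J' J`. Then `P = J J'` is self-adjoint with `P² = 1`, and the dichotomy
applied to `1 - P` gives `P = ±1`, that is `J' = ∓J`.
-/

namespace LieAlgebra

variable (R L : Type*) [CommRing R] [LieRing L] [LieAlgebra R L]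

def centroid : Subalgebra R (Module.End R L) where
  carrier := {f | ∀ x y : L, f ⁅x, y⁆ = ⁅x, f y⁆}
  mul_mem' {f h} hf hh x y := by
    rw [Module.End.mul_apply, Module.End.mul_apply, hh x y, hf x (h y)]
  add_mem' {f h} hf hh x y := by rw [LinearMap.add_apply, LinearMap.add_apply, hf, hh, lie_add]
  algebraMap_mem' r x y := by simp only [Module.algebraMap_end_apply, lie_smul]

variable {R L}

theorem mem_centroid {f : Module.End R L} : f ∈ centroid R L ↔ ∀ x y : L, f ⁅x, y⁆ = ⁅x, f y⁆ :=
  Iff.rfl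

theorem mem_centroid_iff_left {f : Module.End R L} :
    f ∈ centroid R L ↔ ∀ x y : L, f ⁅x, y⁆ = ⁅f x, y⁆ := by
  constructor <;> intro hf x y <;> rw [← lie_skew, map_neg, hf, lie_skew]

theorem commute_apply_lie {f h : Module.End R L} (hf : f ∈ centroid R L) (hh : h ∈ centroid R L)
    (x y : L) : (f * h) ⁅x, y⁆ = (h * f) ⁅x, y⁆ := by
  rw [Module.End.mul_apply, Module.End.mul_apply, hh, mem_centroid_iff_left.mp hf,
    mem_centroid_iff_left.mp hf, hh]

end LieAlgebra

namespace MetricLieAlgebra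

variable [MetricLieAlgebra g]

def innerForm : LinearMap.BilinForm ℝ g :=
  LinearMap.mk₂ ℝ (fun x y => ⟪x, y⟫) inner_add_left inner_smul_left
    (fun x y z => by rw [inner_symm, inner_add_left, inner_symm y, inner_symm z])
    (fun r x y => by rw [inner_symm, inner_smul_left, inner_symm y, smul_eq_mul])

@[simp]
theorem innerForm_apply (x y : g) : innerForm x y = ⟪x, y⟫ := rfl

theorem innerForm_comm (x y : g) : innerForm x y = innerForm y x := inner_symm x y

theorem disjoint_of_forall_inner_eq_zero {p q : Submodule ℝ g}
    (h : ∀ x ∈ p, ∀ y ∈ q, ⟪x, y⟫ = 0) : Disjoint p q :=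
  Submodule.disjoint_def.mpr fun x hp hq => by
    by_contra hx
    exact (inner_self_pos x hx).ne' (h x hp x hq)

theorem eq_zero_or_injective_of_mem_centroid [Module.Finite ℝ g]
    (hirr : ∀ h : LieIdeal ℝ g, IsOrthogonalFactor h → h = ⊥ ∨ h = ⊤)
    {f f' : Module.End ℝ g} (hf : f ∈ LieAlgebra.centroid ℝ g)
    (hadj : innerForm.IsAdjointPair innerForm f f') (hker : ∀ x, f x = 0 → f' x = 0) :
    f = 0 ∨ Function.Injective f := by
  let F : g →ₗ⁅ℝ, g⁆ g := { f with map_lie' := LieAlgebra.mem_centroid.mp hf _ _ }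
  have horth : ∀ x ∈ F.ker, ∀ y ∈ F.range, ⟪x, y⟫ = 0 := by
    rintro x hx _ ⟨u, rfl⟩
    have := hadj u x
    rw [hker x hx, map_zero] at this
    rwa [inner_symm]
  have hcompl : IsCompl F.ker F.range := by
    rw [← LieSubmodule.isCompl_toSubmodule, Submodule.isCompl_iff_disjoint]
    · exact disjoint_of_forall_inner_eq_zero horth
    · have := (F : g →ₗ[ℝ] g).finrank_range_add_finrank_ker
      rw [LieModuleHom.ker_toSubmodule, LieModuleHom.toSubmodule_range]
      omega
  rcases hirr F.ker ⟨F.range, horth, hcompl.sup_eq_top, hcompl.inf_eq_bot⟩ with h | h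
  · exact Or.inr ((LieModuleHom.ker_eq_bot F).mp h)
  · exact Or.inl (LinearMap.ext fun x => LieModuleHom.mem_ker.mp (h ▸ LieSubmodule.mem_top x))

end MetricLieAlgebra

namespace IsOrthBiinvCplxStruct

variable {J : Module.End ℝ g}

theorem mul_self (hJ : IsOrthBiinvCplxStruct J) : J * J = -1 :=
  LinearMap.ext hJ.1

theorem mem_centroid (hJ : IsOrthBiinvCplxStruct J) : J ∈ LieAlgebra.centroid ℝ g :=
  LieAlgebra.mem_centroid_iff_left.mpr hJ.2.1

theorem injective (hJ : IsOrthBiinvCplxStruct J) : Function.Injective J :=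
  Function.LeftInverse.injective (g := -J) fun x => by
    rw [LinearMap.neg_apply, hJ.1, neg_neg]

theorem ne_neg [Nontrivial g] (hJ : IsOrthBiinvCplxStruct J) : J ≠ -J := by
  intro h
  obtain ⟨x, hx⟩ := exists_ne (0 : g)
  have h2 : (2 : ℝ) • J x = 0 := by
    rw [two_smul]
    nth_rw 2 [h]
    exact add_neg_cancel _
  exact hx ((map_eq_zero_iff J hJ.injective).mp ((smul_eq_zero.mp h2).resolve_left two_ne_zero))

variable [MetricLieAlgebra g]

open MetricLieAlgebra

theorem neg (hJ : IsOrthBiinvCplxStruct J) : IsOrthBiinvCplxStruct (-J) := by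
  refine ⟨fun x => ?_, fun x y => ?_, fun x y => ?_⟩
  · simp only [LinearMap.neg_apply, map_neg, hJ.1, neg_neg]
  · simp only [LinearMap.neg_apply, hJ.2.1, neg_lie]
  · change innerForm (-J x) (-J y) = innerForm x y
    rw [LinearMap.map_neg₂, map_neg, neg_neg]
    exact hJ.2.2 x y

theorem isAdjointPair_neg (hJ : IsOrthBiinvCplxStruct J) :
    innerForm.IsAdjointPair innerForm J (-J : Module.End ℝ g) := fun x y => by
  change innerForm (J x) y = innerForm x (-J y)
  rw [map_neg, innerForm_apply x, ← hJ.2.2 x (J y), hJ.1, ← innerForm_apply, map_neg, neg_neg]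

theorem inner_apply_self (hJ : IsOrthBiinvCplxStruct J) (x : g) : ⟪J x, x⟫ = 0 := by
  have h := hJ.isAdjointPair_neg x x
  rw [LinearMap.neg_apply, map_neg, innerForm_apply, innerForm_apply, inner_symm x] at h
  linarith

end IsOrthBiinvCplxStruct

section Irreducible

open MetricLieAlgebra LieAlgebra

variable [MetricLieAlgebra g] [Module.Finite ℝ g] {J J' : Module.End ℝ g}

theorem not_isLieAbelian_of_isOrthBiinvCplxStruct [Nontrivial g]
    (hirr : ∀ h : LieIdeal ℝ g, IsOrthogonalFactor h → h = ⊥ ∨ h = ⊤)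
    (hJ : IsOrthBiinvCplxStruct J) : ¬ IsLieAbelian g := by
  intro hab
  obtain ⟨x₀, hx₀⟩ := exists_ne (0 : g)
  -- `⟪x₀, x₀⟫` times the orthogonal projection onto `ℝ x₀`; its kernel contains `J x₀ ⊥ x₀`
  let p : Module.End ℝ g := (innerForm x₀).smulRight x₀
  have hp : p ∈ centroid ℝ g := mem_centroid.mpr fun x y => by
    simp only [trivial_lie_zero, map_zero]
  have hadj : innerForm.IsAdjointPair innerForm p p := fun x y => by
    simp only [p, LinearMap.smulRight_apply, map_smul, LinearMap.smul_apply, smul_eq_mul]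
    rw [innerForm_comm x]
    ring
  rcases eq_zero_or_injective_of_mem_centroid hirr hp hadj (fun _ h => h) with h | h
  · have : p x₀ = 0 := by rw [h]; rfl
    exact smul_ne_zero (inner_self_pos x₀ hx₀).ne' hx₀ this
  · have : p (J x₀) = p 0 := by
      simp only [p, LinearMap.smulRight_apply, innerForm_apply, inner_symm x₀,
        hJ.inner_apply_self, zero_smul, map_zero]
    exact hx₀ ((map_eq_zero_iff J hJ.injective).mp (h this))

theorem commute_of_isOrthBiinvCplxStruct
    (hirr : ∀ h : LieIdeal ℝ g, IsOrthogonalFactor h → h = ⊥ ∨ h = ⊤)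
    (hg : ¬ IsLieAbelian g) (hJ : IsOrthBiinvCplxStruct J) (hJ' : IsOrthBiinvCplxStruct J') :
    Commute J J' := by
  have hC : J * J' - J' * J ∈ centroid ℝ g :=
    sub_mem (mul_mem hJ.mem_centroid hJ'.mem_centroid) (mul_mem hJ'.mem_centroid hJ.mem_centroid)
  have hadj : innerForm.IsAdjointPair innerForm (J * J' - J' * J : Module.End ℝ g)
      (J' * J - J * J' : Module.End ℝ g) := by
    have := (hJ.isAdjointPair_neg.mul hJ'.isAdjointPair_neg).sub
      (hJ'.isAdjointPair_neg.mul hJ.isAdjointPair_neg)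
    rwa [neg_mul_neg, neg_mul_neg] at this
  have hker : ∀ x, (J * J' - J' * J) x = 0 → (J' * J - J * J') x = 0 := fun x hx => by
    rw [← neg_sub, LinearMap.neg_apply, hx, neg_zero]
  rcases eq_zero_or_injective_of_mem_centroid hirr hC hadj hker with h | h
  · exact sub_eq_zero.mp h
  · refine absurd ⟨fun x y => h ?_⟩ hg
    rw [map_zero, LinearMap.sub_apply, commute_apply_lie hJ.mem_centroid hJ'.mem_centroid, sub_self]

theorem eq_or_eq_neg_of_commute
    (hirr : ∀ h : LieIdeal ℝ g, IsOrthogonalFactor h → h = ⊥ ∨ h = ⊤)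
    (hJ : IsOrthBiinvCplxStruct J) (hJ' : IsOrthBiinvCplxStruct J') (hc : Commute J J') :
    J' = J ∨ J' = -J := by
  have hJ'_eq : J' = -(J * (J * J')) := by rw [← mul_assoc, hJ.mul_self, neg_one_mul, neg_neg]
  have hsq : J * J' * (J * J') = 1 := by
    rw [hc.symm.mul_mul_mul_comm, hJ.mul_self, hJ'.mul_self, neg_one_mul, neg_neg]
  have hQ : 1 - J * J' ∈ centroid ℝ g :=
    sub_mem (one_mem _) (mul_mem hJ.mem_centroid hJ'.mem_centroid)
  have hadj : innerForm.IsAdjointPair innerForm (1 - J * J' : Module.End ℝ g)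
      (1 - J * J' : Module.End ℝ g) := by
    have := LinearMap.isAdjointPair_one.sub (hJ.isAdjointPair_neg.mul hJ'.isAdjointPair_neg)
    rwa [neg_mul_neg, ← hc] at this
  rcases eq_zero_or_injective_of_mem_centroid hirr hQ hadj (fun _ h => h) with h | h
  · right
    rw [hJ'_eq, ← sub_eq_zero.mp h, mul_one]
  · left
    have hprod : (1 - J * J') * (1 + J * J') = 0 := by
      rw [show (1 - J * J') * (1 + J * J') = 1 - J * J' * (J * J') by noncomm_ring, hsq,
        sub_self]
    have h1 : 1 + J * J' = 0 := LinearMap.ext fun x => h (by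
      rw [LinearMap.zero_apply, map_zero, ← Module.End.mul_apply, hprod, LinearMap.zero_apply])
    rw [hJ'_eq, eq_neg_of_add_eq_zero_right h1, mul_neg_one, neg_neg]

end Irreducible

/-- An irreducible metric Lie algebra has either zero or exactly two orthogonal
bi-invariant complex structures; in the latter case they are `J` and `-J`. -/
theorem stmt14 (g : Type*) [LieRing g] [LieAlgebra ℝ g] [Inner ℝ g]
    [MetricLieAlgebra g] [Module.Finite ℝ g] (hg : IsIrreducibleMLA g) :
    {J : g →ₗ[ℝ] g | IsOrthBiinvCplxStruct J} = ∅ ∨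
    ∃ J : g →ₗ[ℝ] g, IsOrthBiinvCplxStruct J ∧
      {J' : g →ₗ[ℝ] g | IsOrthBiinvCplxStruct J'} = {J, -J} ∧ J ≠ -J := by
  rcases Set.eq_empty_or_nonempty {J : g →ₗ[ℝ] g | IsOrthBiinvCplxStruct J} with h | ⟨J, hJ⟩
  · exact Or.inl h
  obtain ⟨⟨x₀, hx₀⟩, hirr⟩ := hg
  have : Nontrivial g := ⟨⟨x₀, 0, hx₀⟩⟩
  have hna := not_isLieAbelian_of_isOrthBiinvCplxStruct hirr hJ
  refine Or.inr ⟨J, hJ, Set.ext fun J' => ⟨fun hJ' => ?_, ?_⟩, hJ.ne_neg⟩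
  · exact eq_or_eq_neg_of_commute hirr hJ hJ' (commute_of_isOrthBiinvCplxStruct hirr hna hJ hJ')
  · rintro (rfl | rfl)
    exacts [hJ, hJ.neg]
end
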